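/- arXiv:2105.04901 — 2 statements merged into one kernel-verified Lean document; each statement's English description precedes it below -/
import Mathlib

section
/- Let Γ be a finite connected simple graph in which every vertex has degree at least 2 (no free edges) and whose genus g = |E(Γ)| − |V(Γ)| + 1 satisfies g > 1. Let G be a finite group acting faithfully by graph automorphisms on Γ, such that no element of G maps an edge to itself while exchanging its two endpoints (the action is without inversions). Then the induced action of G on the first homology H₁(Γ;ℤ) ≅ ℤ^g is also faithful. -/
open Finset

variable {V : Type*} [Fintype V] [DecidableEq V]

/-- The group `C₁(Γ;R)` of simplicial 1-chains of a simple graph, modeled as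
antisymmetric functions on ordered pairs of vertices, supported on adjacent pairs. -/
def chainSpace (R : Type*) [CommRing R] (G : SimpleGraph V) : Submodule R (V → V → R) where
  carrier := {f | (∀ u v, f u v = - f v u) ∧ ∀ u v, ¬ G.Adj u v → f u v = 0}
  add_mem' := by
    rintro f g ⟨hf1, hf2⟩ ⟨hg1, hg2⟩
    refine ⟨fun u v => ?_, fun u v h => ?_⟩
    · simp only [Pi.add_apply, hf1 u v, hg1 u v]; ring
    · simp [Pi.add_apply, hf2 u v h, hg2 u v h]
  zero_mem' := ⟨fun u v => by simp, fun u v _ => rfl⟩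
  smul_mem' := by
    rintro r f ⟨hf1, hf2⟩
    exact ⟨fun u v => by simp [hf1 u v], fun u v h => by simp [hf2 u v h]⟩

/-- The simplicial boundary map `∂ : C₁(Γ;R) → C₀(Γ;R)`, sending the oriented
edge `(u,v)` to `v - u`. -/
def graphBoundary (R : Type*) [CommRing R] (G : SimpleGraph V) :
    chainSpace R G →ₗ[R] (V → R) where
  toFun c := fun v => ∑ u, c.1 u v
  map_add' c d := by funext v; simp [Finset.sum_add_distrib]
  map_smul' r c := by funext v; simp [Finset.mul_sum]

lemma trace_pi1 (T : (V → ℚ) →ₗ[ℚ] (V → ℚ)) :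
    LinearMap.trace ℚ _ T = ∑ i, T (Pi.single i 1) i := by
  classical
  rw [LinearMap.trace_eq_matrix_trace ℚ (Pi.basisFun ℚ V)]
  simp [Matrix.trace, Matrix.diag, LinearMap.toMatrix_apply]

lemma trace_pi2 (T : (V → V → ℚ) →ₗ[ℚ] (V → V → ℚ)) :
    LinearMap.trace ℚ _ T = ∑ i, ∑ j, T (Pi.single i (Pi.single j 1)) i j := by
  classical
  rw [LinearMap.trace_eq_matrix_trace ℚ (Pi.basis (fun _ : V => Pi.basisFun ℚ V))]
  rw [Matrix.trace, ← Finset.univ_sigma_univ, Finset.sum_sigma]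
  simp [Matrix.diag, LinearMap.toMatrix_apply, Pi.basis_repr]

lemma trace_restrict_eq {M : Type*} [AddCommGroup M] [Module ℚ M] [FiniteDimensional ℚ M]
    {C : Submodule ℚ M} (P : M →ₗ[ℚ] M) (hP : ∀ x, P x ∈ C) (hPid : ∀ c ∈ C, P c = c)
    (T : M →ₗ[ℚ] M) (hT : ∀ c ∈ C, T c ∈ C) :
    LinearMap.trace ℚ C (T.restrict hT) = LinearMap.trace ℚ M (T ∘ₗ P) := by
  have h1 : T.restrict hT = (P.codRestrict C hP) ∘ₗ (T ∘ₗ C.subtype) := by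
    refine LinearMap.ext fun c => Subtype.ext ?_
    simpa using (hPid _ (hT c c.2)).symm
  rw [h1, LinearMap.trace_comp_comm']
  congr 1

section Aux
variable (G : SimpleGraph V) [DecidableRel G.Adj]

/-- antisymmetrization projection onto the chain space -/
def projC : (V → V → ℚ) →ₗ[ℚ] (V → V → ℚ) where
  toFun f := fun u v => if G.Adj u v then (f u v - f v u)/2 else 0
  map_add' f g := by
    funext u v
    by_cases h : G.Adj u v
    · simp only [Pi.add_apply, if_pos h]; ring
    · simp [if_neg h]
  map_smul' r f := by
    funext u v
    by_cases h : G.Adj u v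
    · simp only [Pi.smul_apply, if_pos h, smul_eq_mul, RingHom.id_apply]; ring
    · simp [if_neg h]

lemma projC_mem (f : V → V → ℚ) : projC G f ∈ chainSpace ℚ G := by
  refine ⟨fun u v => ?_, fun u v h => if_neg h⟩
  show (if G.Adj u v then (f u v - f v u)/2 else 0) = -(if G.Adj v u then (f v u - f u v)/2 else 0)
  by_cases h : G.Adj u v
  · rw [if_pos h, if_pos h.symm]; ring
  · rw [if_neg h, if_neg (fun h' => h h'.symm)]; ring

lemma projC_id (f : V → V → ℚ) (hf : f ∈ chainSpace ℚ G) : projC G f = f := by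
  funext u v
  show (if G.Adj u v then (f u v - f v u)/2 else 0) = f u v
  by_cases h : G.Adj u v
  · rw [if_pos h, hf.1 u v]; ring
  · rw [if_neg h, (hf.2 u v h).symm]

variable (σ : Equiv.Perm V)

/-- induced action on 1-cochains -/
def actC2 : (V → V → ℚ) →ₗ[ℚ] (V → V → ℚ) where
  toFun f := fun u v => f (σ⁻¹ u) (σ⁻¹ v)
  map_add' f g := rfl
  map_smul' r f := rfl

/-- induced action on 0-chains -/
def actC0 : (V → ℚ) →ₗ[ℚ] (V → ℚ) where
  toFun x := fun v => x (σ⁻¹ v)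
  map_add' f g := rfl
  map_smul' r f := rfl

/-- the chain supported on one edge -/
def edgeChain {u v : V} (h : G.Adj u v) : chainSpace ℚ G :=
  ⟨fun a b => (if a = u ∧ b = v then 1 else 0) - (if a = v ∧ b = u then 1 else 0), by
    constructor
    · intro a b
      dsimp only
      rw [show (if b = u ∧ a = v then (1:ℚ) else 0) = (if a = v ∧ b = u then 1 else 0) from
            if_congr and_comm rfl rfl,
          show (if b = v ∧ a = u then (1:ℚ) else 0) = (if a = u ∧ b = v then 1 else 0) from
            if_congr and_comm rfl rfl]
      ring
    · intro a b hab
      dsimp only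
      rw [if_neg, if_neg]
      · ring
      · rintro ⟨rfl, rfl⟩; exact hab h.symm
      · rintro ⟨rfl, rfl⟩; exact hab h⟩

lemma boundary_edgeChain {u v : V} (h : G.Adj u v) :
    graphBoundary ℚ G (edgeChain G h)
      = fun w => (if w = v then (1:ℚ) else 0) - (if w = u then 1 else 0) := by
  funext w
  show (∑ a, ((if a = u ∧ w = v then (1:ℚ) else 0) - (if a = v ∧ w = u then 1 else 0))) = _
  rw [Finset.sum_sub_distrib]
  simp [ite_and, Finset.sum_ite_eq']

lemma diff_mem_range (hconn : G.Connected) (u v : V) :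
    (fun w => (if w = v then (1:ℚ) else 0) - (if w = u then 1 else 0))
      ∈ LinearMap.range (graphBoundary ℚ G) := by
  obtain ⟨p⟩ := hconn u v
  induction p with
  | nil =>
    have h0 : ∀ y : V, (fun w => (if w = y then (1:ℚ) else 0) - (if w = y then 1 else 0)) = 0 := by
      intro y; funext w; simp
    rw [h0]; exact zero_mem _
  | @cons a b c hab p ih =>
    have h1 : (fun w => (if w = b then (1:ℚ) else 0) - (if w = a then 1 else 0))
        ∈ LinearMap.range (graphBoundary ℚ G) := ⟨edgeChain G hab, boundary_edgeChain G hab⟩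
    have := add_mem ih h1
    have heq : (fun w => (if w = c then (1:ℚ) else 0) - (if w = a then 1 else 0))
        = (fun w => (if w = c then (1:ℚ) else 0) - (if w = b then 1 else 0))
          + (fun w => (if w = b then (1:ℚ) else 0) - (if w = a then 1 else 0)) := by
      funext w; simp only [Pi.add_apply]; ring
    rw [heq]; exact this

lemma sumzero_mem_range (hconn : G.Connected) (x : V → ℚ) (hx : ∑ v, x v = 0) :
    x ∈ LinearMap.range (graphBoundary ℚ G) := by
  obtain ⟨v₀⟩ := hconn.nonempty
  have hxeq : x = ∑ v, x v • (fun w => (if w = v then (1:ℚ) else 0) - (if w = v₀ then 1 else 0)) := by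
    funext w
    rw [Finset.sum_apply]
    simp only [Pi.smul_apply, smul_eq_mul, mul_sub]
    rw [Finset.sum_sub_distrib]
    have h1 : (∑ v, x v * (if w = v then (1:ℚ) else 0)) = x w := by
      simp [mul_ite, Finset.sum_ite_eq]
    have h2 : (∑ v, x v * (if w = v₀ then (1:ℚ) else 0)) = 0 := by
      rw [← Finset.sum_mul, hx, zero_mul]
    rw [h1, h2, sub_zero]
  rw [hxeq]
  exact Submodule.sum_mem _ fun v _ =>
    Submodule.smul_mem _ _ (diff_mem_range G hconn v₀ v)

end Aux
set_option maxHeartbeats 1000000 in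
lemma key_identity (G : SimpleGraph V) [DecidableRel G.Adj] (hconn : G.Connected)
    (σ : Equiv.Perm V) (hσ : ∀ u v, G.Adj u v ↔ G.Adj (σ u) (σ v))
    (hno : ∀ u v, G.Adj u v → ¬ (σ u = v ∧ σ v = u))
    (hker : ∀ c ∈ LinearMap.ker (graphBoundary ℚ G),
        (fun u v => (c : V → V → ℚ) (σ⁻¹ u) (σ⁻¹ v)) = (c : V → V → ℚ)) :
    (univ.filter fun p : V × V => G.Adj p.1 p.2).card + 2 * (univ.filter fun v => σ v = v).card
      = (univ.filter fun p : V × V => G.Adj p.1 p.2 ∧ σ p.1 = p.1 ∧ σ p.2 = p.2).card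
        + 2 * Fintype.card V := by
  classical
  have hfixinv : ∀ x : V, σ x = x → σ⁻¹ x = x := by
    intro x hx
    apply σ.injective
    rw [Equiv.Perm.coe_inv, Equiv.apply_symm_apply, hx]
  have hσ' : ∀ u v, G.Adj (σ⁻¹ u) (σ⁻¹ v) ↔ G.Adj u v := by
    intro u v
    conv_rhs => rw [show u = σ (σ⁻¹ u) from (Equiv.apply_symm_apply σ u).symm,
                    show v = σ (σ⁻¹ v) from (Equiv.apply_symm_apply σ v).symm]
    exact hσ _ _
  have hTmem : ∀ f ∈ chainSpace ℚ G, actC2 σ f ∈ chainSpace ℚ G := by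
    intro f hf
    exact ⟨fun u v => hf.1 _ _, fun u v h => hf.2 _ _ (fun h' => h ((hσ' u v).mp h'))⟩
  set D := graphBoundary ℚ G with hD
  set T1 : chainSpace ℚ G →ₗ[ℚ] chainSpace ℚ G := (actC2 σ).restrict hTmem with hT1
  set S : chainSpace ℚ G →ₗ[ℚ] chainSpace ℚ G := T1 - LinearMap.id with hS
  have hDsum : ∀ c : chainSpace ℚ G, ∑ v, D c v = 0 := by
    intro c
    have hX : ∑ v, ∑ u, (c : V → V → ℚ) u v = - ∑ v, ∑ u, (c : V → V → ℚ) u v := by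
      calc ∑ v, ∑ u, (c : V → V → ℚ) u v
          = ∑ v, ∑ u, -((c : V → V → ℚ) v u) := by
            refine Finset.sum_congr rfl fun v _ => Finset.sum_congr rfl fun u _ => c.2.1 u v
        _ = - ∑ v, ∑ u, (c : V → V → ℚ) v u := by
            simp [Finset.sum_neg_distrib]
        _ = - ∑ v, ∑ u, (c : V → V → ℚ) u v := by rw [Finset.sum_comm]
    have : ∑ v, ∑ u, (c : V → V → ℚ) u v = 0 := by linarith
    simpa [hD, graphBoundary] using this
  have hle : LinearMap.ker D ≤ LinearMap.ker S := by
    intro c hc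
    rw [LinearMap.mem_ker] at hc ⊢
    rw [hS]
    simp only [LinearMap.sub_apply, LinearMap.id_apply, sub_eq_zero]
    apply Subtype.ext
    rw [hT1, LinearMap.restrict_coe_apply]
    exact hker c hc
  set L : (chainSpace ℚ G ⧸ LinearMap.ker D) →ₗ[ℚ] chainSpace ℚ G :=
    Submodule.liftQ _ S hle with hL
  set e := D.quotKerEquivRange with he
  have hcard0 : (Fintype.card V : ℚ) ≠ 0 := by
    have : Nonempty V := hconn.nonempty
    exact_mod_cast Fintype.card_ne_zero
  set πR : (V → ℚ) →ₗ[ℚ] (V → ℚ) :=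
    { toFun := fun x => x - (((∑ v, x v) / (Fintype.card V : ℚ)) • (fun _ => (1:ℚ) : V → ℚ))
      map_add' := by
        intro x y
        funext w
        simp only [Pi.add_apply, Pi.sub_apply, Pi.smul_apply, smul_eq_mul, mul_one,
          Finset.sum_add_distrib]
        ring
      map_smul' := by
        intro r x
        funext w
        simp only [Pi.smul_apply, smul_eq_mul, RingHom.id_apply, Pi.sub_apply, mul_one,
          ← Finset.mul_sum]
        ring } with hπR
  have hπmem : ∀ x, πR x ∈ LinearMap.range D := by
    intro x
    apply sumzero_mem_range G hconn
    show ∑ w, (x w - (((∑ v, x v) / (Fintype.card V : ℚ)) • fun _ => (1:ℚ)) w) = 0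
    simp only [Pi.smul_apply, smul_eq_mul, mul_one, Finset.sum_sub_distrib,
      Finset.sum_const, Finset.card_univ, nsmul_eq_mul]
    rw [mul_comm, div_mul_cancel₀ _ hcard0, sub_self]
  have hπfix : ∀ x : V → ℚ, (∑ v, x v = 0) → πR x = x := by
    intro x hx
    show x - _ = x
    rw [hx]
    simp
  set F : (V → ℚ) →ₗ[ℚ] chainSpace ℚ G :=
    L ∘ₗ e.symm.toLinearMap ∘ₗ (πR.codRestrict _ hπmem) with hF
  have hFbar : ∀ (c : chainSpace ℚ G),
      L (e.symm ⟨D c, LinearMap.mem_range_self D c⟩) = S c := by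
    intro c
    have h1 : e.symm ⟨D c, LinearMap.mem_range_self D c⟩ = Submodule.Quotient.mk c := by
      rw [LinearEquiv.symm_apply_eq, he]
      exact Subtype.ext (D.quotKerEquivRange_apply_mk c).symm
    rw [h1, hL, Submodule.liftQ_apply]
  have hFD : ∀ c, F (D c) = S c := by
    intro c
    show L (e.symm (πR.codRestrict _ hπmem (D c))) = S c
    have h2 : πR.codRestrict _ hπmem (D c) = ⟨D c, LinearMap.mem_range_self D c⟩ := by
      apply Subtype.ext
      show πR (D c) = D c
      exact hπfix _ (hDsum c)
    rw [h2, hFbar]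
  have hcomm : ∀ c : chainSpace ℚ G, D (T1 c) = actC0 σ (D c) := by
    intro c
    funext v
    show ∑ u, (c : V → V → ℚ) (σ⁻¹ u) (σ⁻¹ v) = ∑ u, (c : V → V → ℚ) u (σ⁻¹ v)
    exact Equiv.sum_comp σ⁻¹ (fun u => (c : V → V → ℚ) u (σ⁻¹ v))
  have hS0const : ∀ r : ℚ, (actC0 σ - LinearMap.id : (V → ℚ) →ₗ[ℚ] (V → ℚ)) (r • (fun _ => (1:ℚ))) = 0 := by
    intro r
    funext w
    show (r • (fun _ => (1:ℚ))) (σ⁻¹ w) - (r • (fun _ => (1:ℚ))) w = 0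
    simp
  have hDF : ∀ x, D (F x) = (actC0 σ - LinearMap.id : (V → ℚ) →ₗ[ℚ] (V → ℚ)) x := by
    intro x
    obtain ⟨c, hc⟩ := hπmem x
    have h2 : πR.codRestrict _ hπmem x = ⟨D c, LinearMap.mem_range_self D c⟩ :=
      Subtype.ext hc.symm
    show D (L (e.symm (πR.codRestrict _ hπmem x))) = _
    rw [h2, hFbar]
    have h3 : D (S c) = (actC0 σ - LinearMap.id : (V → ℚ) →ₗ[ℚ] (V → ℚ)) (D c) := by
      rw [hS]
      simp only [LinearMap.sub_apply, LinearMap.id_apply, map_sub]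
      rw [hcomm c]
    rw [h3, hc]
    have h4 : πR x = x - (((∑ v, x v) / (Fintype.card V : ℚ)) • (fun _ => (1:ℚ) : V → ℚ)) := rfl
    rw [h4, map_sub, hS0const, sub_zero]
  -- trace computations
  have tS : LinearMap.trace ℚ _ S = LinearMap.trace ℚ _ (actC0 σ - LinearMap.id : (V → ℚ) →ₗ[ℚ] (V → ℚ)) := by
    have hFDl : F ∘ₗ D = S := LinearMap.ext hFD
    have hDFl : D ∘ₗ F = (actC0 σ - LinearMap.id : (V → ℚ) →ₗ[ℚ] (V → ℚ)) := LinearMap.ext hDF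
    rw [← hFDl, LinearMap.trace_comp_comm', hDFl]
  have hsingle : ∀ i j a b : V,
      (Pi.single i (Pi.single j (1:ℚ)) : V → V → ℚ) a b = if a = i ∧ b = j then 1 else 0 := by
    intro i j a b
    by_cases h : a = i
    · subst h
      rw [Pi.single_eq_same, Pi.single_apply]
      by_cases h2 : b = j
      · rw [if_pos h2, if_pos ⟨rfl, h2⟩]
      · rw [if_neg h2, if_neg (fun hh => h2 hh.2)]
    · rw [Pi.single_eq_of_ne h, if_neg (fun hh => h hh.1)]
      rfl
  have tT1 : LinearMap.trace ℚ _ T1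
      = ((univ.filter fun p : V × V =>
          G.Adj p.1 p.2 ∧ σ p.1 = p.1 ∧ σ p.2 = p.2).card : ℚ) / 2 := by
    rw [hT1, trace_restrict_eq (projC G) (projC_mem G) (projC_id G) (actC2 σ) hTmem, trace_pi2]
    have hterm : ∀ i j : V, (actC2 σ ∘ₗ projC G) (Pi.single i (Pi.single j 1)) i j
        = if G.Adj i j ∧ σ i = i ∧ σ j = j then (1:ℚ)/2 else 0 := by
      intro i j
      show (if G.Adj (σ⁻¹ i) (σ⁻¹ j) then
          ((Pi.single i (Pi.single j (1:ℚ)) : V → V → ℚ) (σ⁻¹ i) (σ⁻¹ j)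
            - (Pi.single i (Pi.single j (1:ℚ)) : V → V → ℚ) (σ⁻¹ j) (σ⁻¹ i))/2 else 0) = _
      by_cases hfix : σ i = i ∧ σ j = j
      · obtain ⟨hfi, hfj⟩ := hfix
        rw [hfixinv i hfi, hfixinv j hfj, hsingle, hsingle]
        by_cases hadj : G.Adj i j
        · have hne : i ≠ j := G.ne_of_adj hadj
          rw [if_pos (⟨rfl, rfl⟩ : i = i ∧ j = j),
            if_neg (fun hh : j = i ∧ i = j => hne hh.2),
            if_pos hadj, if_pos ⟨hadj, hfi, hfj⟩]
          norm_num
        · rw [if_neg hadj, if_neg (fun hh : G.Adj i j ∧ σ i = i ∧ σ j = j => hadj hh.1)]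
      · rw [if_neg (fun hh : G.Adj i j ∧ σ i = i ∧ σ j = j => hfix ⟨hh.2.1, hh.2.2⟩)]
        by_cases hadj2 : G.Adj (σ⁻¹ i) (σ⁻¹ j)
        · rw [if_pos hadj2, hsingle, hsingle]
          have h1 : ¬(σ⁻¹ i = i ∧ σ⁻¹ j = j) := by
            rintro ⟨ha, hb⟩
            refine hfix ⟨?_, ?_⟩
            · conv_lhs => rw [← ha, Equiv.Perm.coe_inv, Equiv.apply_symm_apply]
            · conv_lhs => rw [← hb, Equiv.Perm.coe_inv, Equiv.apply_symm_apply]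
          have h2 : ¬(σ⁻¹ j = i ∧ σ⁻¹ i = j) := by
            rintro ⟨ha, hb⟩
            have hji : G.Adj j i := by rwa [ha, hb] at hadj2
            have hsj : σ j = i := by rw [← hb, Equiv.Perm.coe_inv, Equiv.apply_symm_apply]
            have hsi : σ i = j := by rw [← ha, Equiv.Perm.coe_inv, Equiv.apply_symm_apply]
            exact hno j i hji ⟨hsj, hsi⟩
          rw [if_neg h1, if_neg h2]
          norm_num
        · rw [if_neg hadj2]
    rw [Finset.sum_congr rfl fun i (_ : i ∈ univ) =>
      Finset.sum_congr rfl fun j (_ : j ∈ univ) => hterm i j]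
    have hcount : (((univ.filter fun p : V × V =>
        G.Adj p.1 p.2 ∧ σ p.1 = p.1 ∧ σ p.2 = p.2).card : ℕ) : ℚ)
        = ∑ i, ∑ j, (if G.Adj i j ∧ σ i = i ∧ σ j = j then (1:ℚ) else 0) := by
      rw [Finset.card_filter]
      push_cast
      rw [Fintype.sum_prod_type]
    rw [hcount, Finset.sum_div]
    refine Finset.sum_congr rfl fun i _ => ?_
    rw [Finset.sum_div]
    refine Finset.sum_congr rfl fun j _ => ?_
    split_ifs <;> norm_num
  have hidmem : ∀ c ∈ chainSpace ℚ G, (LinearMap.id : (V → V → ℚ) →ₗ[ℚ] _) c ∈ chainSpace ℚ G :=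
    fun c hc => hc
  have tId : LinearMap.trace ℚ (chainSpace ℚ G) LinearMap.id
      = ((univ.filter fun p : V × V => G.Adj p.1 p.2).card : ℚ) / 2 := by
    have hrestr : (LinearMap.id : (V → V → ℚ) →ₗ[ℚ] _).restrict hidmem = LinearMap.id := by
      ext c
      rfl
    rw [← hrestr, trace_restrict_eq (projC G) (projC_mem G) (projC_id G) _ hidmem,
      LinearMap.id_comp, trace_pi2]
    have hterm : ∀ i j : V, (projC G) (Pi.single i (Pi.single j 1)) i j
        = if G.Adj i j then (1:ℚ)/2 else 0 := by
      intro i j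
      show (if G.Adj i j then
          ((Pi.single i (Pi.single j (1:ℚ)) : V → V → ℚ) i j
            - (Pi.single i (Pi.single j (1:ℚ)) : V → V → ℚ) j i)/2 else 0) = _
      by_cases hadj : G.Adj i j
      · have hne : i ≠ j := G.ne_of_adj hadj
        rw [hsingle, hsingle, if_pos (⟨rfl, rfl⟩ : i = i ∧ j = j),
          if_neg (fun hh : j = i ∧ i = j => hne hh.2), if_pos hadj, if_pos hadj]
        norm_num
      · rw [if_neg hadj, if_neg hadj]
    rw [Finset.sum_congr rfl fun i (_ : i ∈ univ) =>
      Finset.sum_congr rfl fun j (_ : j ∈ univ) => hterm i j]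
    have hcount : (((univ.filter fun p : V × V => G.Adj p.1 p.2).card : ℕ) : ℚ)
        = ∑ i, ∑ j, (if G.Adj i j then (1:ℚ) else 0) := by
      rw [Finset.card_filter]
      push_cast
      rw [Fintype.sum_prod_type]
    rw [hcount, Finset.sum_div]
    refine Finset.sum_congr rfl fun i _ => ?_
    rw [Finset.sum_div]
    refine Finset.sum_congr rfl fun j _ => ?_
    split_ifs <;> norm_num
  have tS0 : LinearMap.trace ℚ _ (actC0 σ - LinearMap.id : (V → ℚ) →ₗ[ℚ] (V → ℚ))
      = ((univ.filter fun v => σ v = v).card : ℚ) - (Fintype.card V : ℚ) := by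
    rw [show LinearMap.trace ℚ (V → ℚ) (actC0 σ - LinearMap.id : (V → ℚ) →ₗ[ℚ] (V → ℚ))
        = LinearMap.trace ℚ (V → ℚ) (actC0 σ) - LinearMap.trace ℚ (V → ℚ) LinearMap.id
       from map_sub _ _ _,
       trace_pi1 (actC0 σ), trace_pi1 LinearMap.id]
    have h1 : ∀ i : V, actC0 σ (Pi.single i 1) i = if σ i = i then (1:ℚ) else 0 := by
      intro i
      show (Pi.single i (1:ℚ) : V → ℚ) (σ⁻¹ i) = _
      rw [Pi.single_apply]
      refine if_congr ⟨fun h => ?_, fun h => hfixinv i h⟩ rfl rfl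
      conv_lhs => rw [← h, Equiv.Perm.coe_inv, Equiv.apply_symm_apply]
    rw [Finset.sum_congr rfl fun i (_ : i ∈ univ) => h1 i]
    have h2 : ∀ i : V, (LinearMap.id : (V → ℚ) →ₗ[ℚ] _) (Pi.single i 1) i = 1 := by
      intro i
      show (Pi.single i (1:ℚ) : V → ℚ) i = 1
      rw [Pi.single_eq_same]
    rw [Finset.sum_congr rfl fun i (_ : i ∈ univ) => h2 i]
    rw [Finset.sum_boole, Finset.sum_const, Finset.card_univ, nsmul_eq_mul, mul_one]
  have tSsub : LinearMap.trace ℚ _ S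
      = LinearMap.trace ℚ _ T1 - LinearMap.trace ℚ (chainSpace ℚ G) LinearMap.id := by
    rw [hS]
    exact map_sub (LinearMap.trace ℚ (chainSpace ℚ G)) T1 LinearMap.id
  have final : ((univ.filter fun p : V × V =>
        G.Adj p.1 p.2 ∧ σ p.1 = p.1 ∧ σ p.2 = p.2).card : ℚ) / 2
      - ((univ.filter fun p : V × V => G.Adj p.1 p.2).card : ℚ) / 2
      = ((univ.filter fun v => σ v = v).card : ℚ) - (Fintype.card V : ℚ) := by
    rw [← tT1, ← tId, ← tSsub, tS, tS0]
  have hq : ((univ.filter fun p : V × V => G.Adj p.1 p.2).card : ℚ)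
      + 2 * ((univ.filter fun v => σ v = v).card : ℚ)
      = ((univ.filter fun p : V × V =>
          G.Adj p.1 p.2 ∧ σ p.1 = p.1 ∧ σ p.2 = p.2).card : ℚ)
        + 2 * (Fintype.card V : ℚ) := by linarith
  exact_mod_cast hq
set_option maxHeartbeats 1000000 in
/-- Let `Γ` be a finite connected simple graph with all vertex degrees at least 2
(no free edges) and genus `g = |E| - |V| + 1 > 1`.  If a finite group `H` acts
faithfully on `Γ` by graph automorphisms, without inversions (no element maps an
edge to itself exchanging its endpoints), then the induced action of `H` on the
first homology `H₁(Γ;ℤ) = ker ∂` is also faithful: any element acting as the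
identity on `ker ∂` is trivial. -/
theorem faithful_on_homology {V : Type*} [Fintype V] [DecidableEq V]
    (G : SimpleGraph V) [DecidableRel G.Adj]
    (hconn : G.Connected) (hdeg : ∀ v, 2 ≤ G.degree v)
    (g : ℕ) (hg : (g : ℤ) = (G.edgeFinset.card : ℤ) - (Fintype.card V : ℤ) + 1) (hg1 : 1 < g)
    (H : Type*) [Group H] [Finite H] (ρ : H →* Equiv.Perm V)
    (hadj : ∀ (h : H) (u v : V), G.Adj u v ↔ G.Adj (ρ h u) (ρ h v))
    (hfaithful : Function.Injective ρ)
    (hnoinv : ∀ (h : H) (u v : V), G.Adj u v → ¬ (ρ h u = v ∧ ρ h v = u)) :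
    ∀ h : H,
      (∀ c ∈ LinearMap.ker (graphBoundary ℤ G),
        (fun u v => c.1 ((ρ h)⁻¹ u) ((ρ h)⁻¹ v)) = c.1) → h = 1 := by
  classical
  intro h hZ
  set σ := ρ h with hσdef
  -- transfer the kernel hypothesis from ℤ to ℚ
  have hkerQ : ∀ c ∈ LinearMap.ker (graphBoundary ℚ G),
      (fun u v => (c : V → V → ℚ) (σ⁻¹ u) (σ⁻¹ v)) = (c : V → V → ℚ) := by
    intro c hc
    set q : V → V → ℚ := (c : V → V → ℚ) with hq
    set N : ℕ := ∏ p : V × V, (q p.1 p.2).den with hN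
    have hNpos : 0 < N := Finset.prod_pos (fun p _ => (q p.1 p.2).pos)
    have hdvd : ∀ u v : V, (q u v).den ∣ N := fun u v =>
      Finset.dvd_prod_of_mem _ (Finset.mem_univ ((u, v) : V × V))
    have hex : ∀ u v : V, ∃ zz : ℤ, (zz : ℚ) = (N : ℚ) * q u v := by
      intro u v
      obtain ⟨k, hk⟩ := hdvd u v
      refine ⟨(q u v).num * k, ?_⟩
      have hden : (q u v) * ((q u v).den : ℚ) = ((q u v).num : ℚ) :=
        Rat.mul_den_eq_num _
      calc ((((q u v).num * k : ℤ)) : ℚ) = ((q u v).num : ℚ) * (k : ℚ) := by push_cast; ring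
        _ = (q u v * ((q u v).den : ℚ)) * (k : ℚ) := by rw [hden]
        _ = (((q u v).den * k : ℕ) : ℚ) * q u v := by push_cast; ring
        _ = (N : ℚ) * q u v := by rw [← hk]
    choose z hz using hex
    have hmemZ : (fun u v => z u v) ∈ chainSpace ℤ G := by
      constructor
      · intro u v
        have hanti : q u v = - q v u := c.2.1 u v
        have hcast : ((z u v : ℤ) : ℚ) = ((-(z v u) : ℤ) : ℚ) := by
          push_cast
          rw [hz, hz, hanti]
          ring
        exact_mod_cast hcast
      · intro u v huv
        have h0 : q u v = 0 := c.2.2 u v huv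
        have hcast : ((z u v : ℤ) : ℚ) = ((0 : ℤ) : ℚ) := by
          rw [hz, h0, mul_zero, Int.cast_zero]
        exact_mod_cast hcast
    have hkerZ : (⟨fun u v => z u v, hmemZ⟩ : chainSpace ℤ G)
        ∈ LinearMap.ker (graphBoundary ℤ G) := by
      rw [LinearMap.mem_ker]
      funext v
      show (∑ u, z u v) = 0
      have hDc : (∑ u, q u v) = 0 := by
        have h0 : graphBoundary ℚ G c = 0 := LinearMap.mem_ker.mp hc
        exact congrFun h0 v
      have hcast : ((∑ u, z u v : ℤ) : ℚ) = 0 := by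
        push_cast
        rw [Finset.sum_congr rfl fun u _ => hz u v, ← Finset.mul_sum, hDc, mul_zero]
      exact_mod_cast hcast
    have happ := hZ _ hkerZ
    funext u v
    have h1 : (z (σ⁻¹ u) (σ⁻¹ v) : ℚ) = (z u v : ℚ) := by
      exact_mod_cast congrFun (congrFun happ u) v
    have h2 : (N : ℚ) * q (σ⁻¹ u) (σ⁻¹ v) = (N : ℚ) * q u v := by
      rw [← hz, ← hz, h1]
    have hN0 : (N : ℚ) ≠ 0 := Nat.cast_ne_zero.mpr hNpos.ne'
    exact mul_left_cancel₀ hN0 h2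
  have hid := key_identity G hconn σ (hadj h) (hnoinv h) hkerQ
  -- combinatorial endgame
  suffices hallfix : ∀ v, σ v = v by
    apply hfaithful
    rw [map_one]
    exact Equiv.ext hallfix
  by_contra hnot
  push_neg at hnot
  obtain ⟨v₁, hv₁⟩ := hnot
  set Mv := univ.filter (fun v => ¬ σ v = v) with hMv
  have hv₁m : v₁ ∈ Mv := by simp [hMv, hv₁]
  set n0 := (univ.filter fun v => σ v = v).card with hn0
  set m := Mv.card with hm
  have hm0 : 0 < m := Finset.card_pos.mpr ⟨v₁, hv₁m⟩
  have hsplitV : n0 + m = Fintype.card V := by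
    rw [hn0, hm, hMv, ← Finset.card_univ]
    exact Finset.card_filter_add_card_filter_not (fun v => σ v = v)
  set Ω := univ.filter (fun p : V × V => G.Adj p.1 p.2) with hΩ
  set ΩF := univ.filter
    (fun p : V × V => G.Adj p.1 p.2 ∧ σ p.1 = p.1 ∧ σ p.2 = p.2) with hΩF
  set ΩN := univ.filter
    (fun p : V × V => G.Adj p.1 p.2 ∧ ¬(σ p.1 = p.1 ∧ σ p.2 = p.2)) with hΩN
  have hsplitΩ : ΩF.card + ΩN.card = Ω.card := by
    have e1 : ΩF = Ω.filter (fun p => σ p.1 = p.1 ∧ σ p.2 = p.2) := by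
      rw [hΩF, hΩ, Finset.filter_filter]
    have e2 : ΩN = Ω.filter (fun p => ¬(σ p.1 = p.1 ∧ σ p.2 = p.2)) := by
      rw [hΩN, hΩ, Finset.filter_filter]
    rw [e1, e2]
    exact Finset.card_filter_add_card_filter_not _
  have hΩNcard : ΩN.card = 2 * m := by omega
  set Ω1 := univ.filter (fun p : V × V => G.Adj p.1 p.2 ∧ ¬ σ p.1 = p.1) with hΩ1
  set Ω2 := univ.filter (fun p : V × V => G.Adj p.1 p.2 ∧ ¬ σ p.2 = p.2) with hΩ2
  set Ω12 := univ.filter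
    (fun p : V × V => G.Adj p.1 p.2 ∧ ¬ σ p.1 = p.1 ∧ ¬ σ p.2 = p.2) with hΩ12
  have hUI : ΩN.card + Ω12.card = Ω1.card + Ω2.card := by
    have eN : ΩN = Ω1 ∪ Ω2 := by
      rw [hΩ1, hΩ2, hΩN, ← Finset.filter_or]
      apply Finset.filter_congr
      intro p _
      tauto
    have e12 : Ω12 = Ω1 ∩ Ω2 := by
      rw [hΩ1, hΩ2, hΩ12, ← Finset.filter_and]
      apply Finset.filter_congr
      intro p _
      tauto
    rw [eN, e12]
    exact Finset.card_union_add_card_inter _ _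
  have hswap : Ω2.card = Ω1.card := by
    apply Finset.card_bij (fun p _ => (p.2, p.1))
    · intro p hp
      rw [hΩ2, Finset.mem_filter] at hp
      rw [hΩ1, Finset.mem_filter]
      exact ⟨Finset.mem_univ _, hp.2.1.symm, hp.2.2⟩
    · intro p _ q _ hpq
      have h1 := congrArg Prod.fst hpq
      have h2 := congrArg Prod.snd hpq
      exact Prod.ext h2 h1
    · intro q hq
      rw [hΩ1, Finset.mem_filter] at hq
      exact ⟨(q.2, q.1), by
        rw [hΩ2, Finset.mem_filter]
        exact ⟨Finset.mem_univ _, hq.2.1.symm, hq.2.2⟩, rfl⟩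
  have hΩ1card : Ω1.card = ∑ u ∈ Mv, G.degree u := by
    have hbi : Ω1 = Mv.biUnion (fun u => {u} ×ˢ G.neighborFinset u) := by
      ext p
      rw [hΩ1, hMv, Finset.mem_filter, Finset.mem_biUnion]
      constructor
      · rintro ⟨-, hadj', hmov⟩
        exact ⟨p.1, by simp [hmov], by
          rw [Finset.mem_product]
          exact ⟨Finset.mem_singleton_self _, (SimpleGraph.mem_neighborFinset _ _ _).mpr hadj'⟩⟩
      · rintro ⟨u, hu, hp⟩
        rw [Finset.mem_product, Finset.mem_singleton] at hp
        obtain ⟨hp1, hp2⟩ := hp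
        rw [SimpleGraph.mem_neighborFinset] at hp2
        simp only [Finset.mem_filter, Finset.mem_univ, true_and] at hu
        subst hp1
        exact ⟨Finset.mem_univ _, hp2, hu⟩
    rw [hbi, Finset.card_biUnion]
    · refine Finset.sum_congr rfl fun u _ => ?_
      rw [Finset.card_product, Finset.card_singleton, one_mul]
      rfl
    · intro a _ b _ hab
      rw [Function.onFun, Finset.disjoint_left]
      rintro ⟨x, y⟩ hx hy
      rw [Finset.mem_product, Finset.mem_singleton] at hx hy
      exact hab (hx.1 ▸ hy.1 ▸ rfl)
  have hΩ1lower : 2 * m ≤ Ω1.card := by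
    rw [hΩ1card]
    calc 2 * m = ∑ _u ∈ Mv, 2 := by rw [Finset.sum_const, smul_eq_mul, mul_comm]
      _ ≤ ∑ u ∈ Mv, G.degree u := Finset.sum_le_sum fun u _ => hdeg u
  have hΩ12sub : Ω12 ⊆ ΩN := by
    intro p hp
    rw [hΩ12, Finset.mem_filter] at hp
    rw [hΩN, Finset.mem_filter]
    exact ⟨Finset.mem_univ _, hp.2.1, fun hh => hp.2.2.1 hh.1⟩
  have hΩ12le : Ω12.card ≤ 2 * m := hΩNcard ▸ Finset.card_le_card hΩ12sub
  have hΩ1eq : Ω1.card = 2 * m := by omega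
  have hset : ΩN = Ω12 :=
    (Finset.eq_of_subset_of_card_le hΩ12sub (by omega)).symm
  have hpres : ∀ u v, G.Adj u v → σ u = u → σ v = v := by
    intro u v huv hu
    by_contra hv
    have hmem : (u, v) ∈ ΩN := by
      rw [hΩN, Finset.mem_filter]
      exact ⟨Finset.mem_univ _, huv, fun hh => hv hh.2⟩
    rw [hset, hΩ12, Finset.mem_filter] at hmem
    exact hmem.2.2.1 hu
  have hwalk : ∀ (x y : V) (p : G.Walk x y), σ x = x → σ y = y := by
    intro x y p
    induction p with
    | nil => exact fun hx => hx
    | cons hxy q ih => exact fun hx => ih (hpres _ _ hxy hx)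
  have hnofix : ∀ v, ¬ σ v = v := by
    intro v hv
    obtain ⟨p⟩ := hconn v v₁
    exact hv₁ (hwalk v v₁ p hv)
  have hMuniv : Mv = univ := by
    rw [hMv]
    exact Finset.filter_true_of_mem fun v _ => hnofix v
  have hmcard : m = Fintype.card V := by rw [hm, hMuniv, Finset.card_univ]
  have hdegsum : Ω1.card = 2 * G.edgeFinset.card := by
    rw [hΩ1card, hMuniv]
    exact G.sum_degrees_eq_twice_card_edges
  have hE : G.edgeFinset.card = Fintype.card V := by omega
  have hgone : (g : ℤ) = 1 := by rw [hg, hE]; ring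
  have : g = 1 := by exact_mod_cast hgone
  omega
end

section
/- Let Γ be a finite connected simple graph in which every vertex has degree at least 2 (no free edges) and with genus g = |E(Γ)| − |V(Γ)| + 1 > 1. If Γ′ is a subgraph of Γ (a subset V′ ⊆ V(Γ) together with a set E′ of edges of Γ having both endpoints in V′) whose Euler characteristic satisfies χ(Γ′) = |V′| − |E′| = χ(Γ) = |V(Γ)| − |E(Γ)|, then Γ′ = Γ, i.e. V′ = V(Γ) and E′ = E(Γ). -/
/-!
Let `W` be the set of vertices missing from `Γ'` and `T` the set of edges missing from it;
`χ(Γ') = χ(Γ)` says `#T = #W`. Every edge meeting `W` lies in `T`, so counting incidences,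
`2 #W ≤ ∑_{v ∈ W} deg v = ∑_{e ∈ T} #(e ∩ W) ≤ 2 #T = 2 #W`.
Equality forces every edge of `T` to lie inside `W`, so no edge leaves `W`, and by
connectedness `W` is empty or everything. In the latter case `Γ'` is empty and `χ(Γ) = 0`,
i.e. `g = 1`.
-/

open Finset

namespace SimpleGraph

theorem Connected.eq_univ_of_adj_closed {V : Type*} [Fintype V] {G : SimpleGraph V}
    (hconn : G.Connected) {W : Finset V} (hW : W.Nonempty)
    (hclosed : ∀ a b, G.Adj a b → a ∈ W → b ∈ W) : W = univ := by
  obtain ⟨u, hu⟩ := hW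
  refine eq_univ_of_forall fun v ↦ by_contra fun hv ↦ ?_
  obtain ⟨d, -, hd, hd'⟩ := (hconn u v).some.exists_boundary_dart (W : Set V) hu hv
  exact hd' (hclosed _ _ d.adj hd)

variable {V : Type*} [Fintype V] [DecidableEq V] (G : SimpleGraph V) [DecidableRel G.Adj]

theorem sum_degree_eq_sum_card_inter (W : Finset V) :
    ∑ v ∈ W, G.degree v = ∑ e ∈ G.edgeFinset, #(W ∩ e.toFinset) := by
  simp only [← card_incidenceFinset_eq_degree, incidenceFinset_eq_filter,
    ← filter_mem_eq_inter, Sym2.mem_toFinset]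
  exact sum_card_bipartiteAbove_eq_sum_card_bipartiteBelow fun (v : V) (e : Sym2 V) ↦ v ∈ e

theorem mem_of_adj_of_card_edges_le {W : Finset V} (hdeg : ∀ v ∈ W, 2 ≤ G.degree v)
    {T : Finset (Sym2 V)} (hT : T ⊆ G.edgeFinset)
    (hout : ∀ e ∈ G.edgeFinset, e ∉ T → ∀ v ∈ e, v ∉ W) (hcard : #T ≤ #W)
    {a b : V} (hab : G.Adj a b) (ha : a ∈ W) : b ∈ W := by
  have hle (e : Sym2 V) : #(W ∩ e.toFinset) ≤ 2 :=
    (card_le_card inter_subset_right).trans (by rw [Sym2.card_toFinset]; split_ifs <;> norm_num)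
  have hsum : ∑ e ∈ T, #(W ∩ e.toFinset) = ∑ e ∈ T, 2 := by
    refine le_antisymm (sum_le_sum fun e _ ↦ hle e) ?_
    calc ∑ e ∈ T, 2 = 2 * #T := by rw [sum_const, smul_eq_mul, mul_comm]
      _ ≤ 2 * #W := by omega
      _ = ∑ v ∈ W, 2 := by rw [sum_const, smul_eq_mul, mul_comm]
      _ ≤ ∑ v ∈ W, G.degree v := sum_le_sum hdeg
      _ = ∑ e ∈ G.edgeFinset, #(W ∩ e.toFinset) := G.sum_degree_eq_sum_card_inter W
      _ = ∑ e ∈ T, #(W ∩ e.toFinset) := by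
        refine (sum_subset hT fun e he heT ↦ card_eq_zero.2 ?_).symm
        exact eq_empty_of_forall_notMem fun v hv ↦
          hout e he heT v (Sym2.mem_toFinset.1 (mem_inter.1 hv).2) (mem_inter.1 hv).1
  have hfull : ∀ e ∈ T, #(W ∩ e.toFinset) = 2 :=
    (sum_eq_sum_iff_of_le fun e _ ↦ hle e).1 hsum
  have hedge : s(a, b) ∈ T := by
    by_contra h
    exact hout _ (mem_edgeFinset.2 hab) h a (Sym2.mem_mk_left a b) ha
  by_contra hb
  have hsub : W ∩ s(a, b).toFinset ⊆ {a} := by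
    intro v hv
    simp only [mem_inter, Sym2.mem_toFinset, Sym2.mem_iff] at hv
    obtain ⟨hvW, rfl | rfl⟩ := hv
    · exact mem_singleton_self v
    · exact absurd hvW hb
  have := (card_le_card hsub).trans_eq (card_singleton a)
  have := hfull _ hedge
  omega

end SimpleGraph

/-- Let `Γ` be a finite connected simple graph with all vertex degrees at least 2
(no free edges) and genus `g = |E| - |V| + 1 > 1`.  If `Γ' = (V', E')` is a
subgraph of `Γ` (a set of vertices together with a set of edges of `Γ` all of
whose endpoints lie in `V'`) with `χ(Γ') = |V'| - |E'| = χ(Γ) = |V| - |E|`,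
then `Γ' = Γ`, i.e. `V' = V` and `E' = E`. -/
theorem subgraph_eq_of_eulerChar_eq {V : Type*} [Fintype V] [DecidableEq V]
    (G : SimpleGraph V) [DecidableRel G.Adj]
    (hconn : G.Connected) (hdeg : ∀ v, 2 ≤ G.degree v)
    (g : ℕ) (hg : (g : ℤ) = (G.edgeFinset.card : ℤ) - (Fintype.card V : ℤ) + 1) (hg1 : 1 < g)
    (V' : Finset V) (E' : Finset (Sym2 V))
    (hE' : E' ⊆ G.edgeFinset)
    (hends : ∀ e ∈ E', ∀ v ∈ e, v ∈ V')
    (hchi : (V'.card : ℤ) - (E'.card : ℤ)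
      = (Fintype.card V : ℤ) - (G.edgeFinset.card : ℤ)) :
    V' = Finset.univ ∧ E' = G.edgeFinset := by
  have hE'le := card_le_card hE'
  have hV'le := card_le_univ V'
  have hcard : #(G.edgeFinset \ E') ≤ #V'ᶜ := by
    rw [card_sdiff_of_subset hE', card_compl]
    omega
  have hclosed (a b : V) (hab : G.Adj a b) (ha : a ∈ V'ᶜ) : b ∈ V'ᶜ :=
    G.mem_of_adj_of_card_edges_le (fun v _ ↦ hdeg v) sdiff_subset
      (fun e he heT v hv hvW ↦ mem_compl.1 hvW (hends e (by simpa [he] using heT) v hv))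
      hcard hab ha
  have hV' : V' = univ := by
    rcases V'ᶜ.eq_empty_or_nonempty with hW | hW
    · exact compl_eq_empty_iff V' |>.1 hW
    have hempty : V' = ∅ := (compl_eq_univ_iff V').1 (hconn.eq_univ_of_adj_closed hW hclosed)
    have hE'empty : E' = ∅ := eq_empty_of_forall_notMem fun e he ↦ by
      simpa [hempty] using hends e he _ (Sym2.out_fst_mem e)
    simp only [hempty, hE'empty, card_empty, Nat.cast_zero, sub_zero] at hchi
    omega
  refine ⟨hV', eq_of_subset_of_card_le hE' ?_⟩
  rw [hV', card_univ] at hchi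
  omega
end
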